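/- arXiv:1712.02056 — 3 statements merged into one kernel-verified Lean document; each statement's English description precedes it below -/
import Mathlib

section
/- Let ω ∈ (−1,1) and let φ_ω(x) = √(2(1−ω²)) · sech(√(1−ω²)·x). If f : ℝ → ℝ is a C² function with f(x) → 0 and f'(x) → 0 as |x| → ∞, satisfying −f'' + (1−ω²)f − 3φ_ω²·f = 0 on ℝ, then there exists c ∈ ℝ such that f = c·φ_ω'. In other words, the kernel of L₊ = −∂ₓ² + (1−ω²) − 3φ_ω² among decaying C² functions is spanned by φ_ω'. -/
open Real Set Filter Topology

/-- The ground-state soliton of the KGZ standing-wave equation. -/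
noncomputable def phiSol (ω : ℝ) (x : ℝ) : ℝ :=
  Real.sqrt (2 * (1 - ω ^ 2)) * (1 / Real.cosh (Real.sqrt (1 - ω ^ 2) * x))

/-!
Both `f` and `φ_ω'` solve `y'' = q y` with `q = (1 - ω²) - 3φ_ω²`, so their Wronskian
`f φ_ω'' - f' φ_ω'` is constant. Since `f, f'` and `φ_ω', φ_ω''` all tend to `0` at `+∞`, it
vanishes identically. At `0` we have `φ_ω'(0) = 0` and `φ_ω''(0) ≠ 0`, so `f(0) = 0`; then
`f - c φ_ω'` with `c = f'(0) / φ_ω''(0)` has zero Cauchy data at `0`, and it vanishes by uniqueness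
for the linear ODE.
-/

def SolvesLinearODE (q y y' : ℝ → ℝ) : Prop :=
  ∀ t, HasDerivAt y (y' t) t ∧ HasDerivAt y' (q t * y t) t

theorem lipschitzWith_companion {a K : ℝ} (ha : ‖a‖ ≤ K) :
    LipschitzWith (max 1 K.toNNReal) fun p : ℝ × ℝ => (p.2, a * p.1) := by
  refine (LipschitzWith.prod_snd.prodMk ((lipschitzWith_smul a).comp
    LipschitzWith.prod_fst)).weaken (max_le_max le_rfl ?_)
  rw [mul_one, ← NNReal.coe_le_coe, coe_nnnorm, Real.coe_toNNReal']
  exact le_max_of_le_left ha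

namespace SolvesLinearODE

variable {q y y' z z' : ℝ → ℝ}

theorem sub_const_mul (hy : SolvesLinearODE q y y') (hz : SolvesLinearODE q z z') (c : ℝ) :
    SolvesLinearODE q (fun t => y t - c * z t) (fun t => y' t - c * z' t) := fun t =>
  ⟨(hy t).1.sub ((hz t).1.const_mul c),
    ((hy t).2.sub ((hz t).2.const_mul c)).congr_deriv (by ring)⟩

theorem eq_zero (hy : SolvesLinearODE q y y') (hq : Continuous q) {t₀ : ℝ} (h₀ : y t₀ = 0)
    (h₀' : y' t₀ = 0) : y = 0 := by
  funext t
  obtain ⟨R, ht, ht₀⟩ : ∃ R, t ∈ Ioo (-R) R ∧ t₀ ∈ Ioo (-R) R :=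
    ⟨|t| + |t₀| + 1, abs_lt.1 (by linarith [abs_nonneg t₀]), abs_lt.1 (by linarith [abs_nonneg t])⟩
  obtain ⟨K, hK⟩ := (isCompact_Icc (a := -R) (b := R)).exists_bound_of_continuousOn hq.continuousOn
  have huniq := ODE_solution_unique_of_mem_Ioo (v := fun s p => (p.2, q s * p.1))
    (s := fun _ => univ) (f := fun s => (y s, y' s)) (g := 0)
    (fun s hs => (lipschitzWith_companion (hK s (Ioo_subset_Icc_self hs))).lipschitzOnWith)
    ht₀ (fun s _ => ⟨(hy s).1.prodMk (hy s).2, trivial⟩)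
    (fun s _ => ⟨(hasDerivAt_const s (0 : ℝ × ℝ)).congr_deriv (by simp; rfl), trivial⟩)
    (by simp [h₀, h₀']) ht
  simpa using congrArg Prod.fst huniq

theorem wronskian_eq (hy : SolvesLinearODE q y y') (hz : SolvesLinearODE q z z') (t s : ℝ) :
    y t * z' t - y' t * z t = y s * z' s - y' s * z s := by
  have hW : ∀ t, HasDerivAt (fun t => y t * z' t - y' t * z t) 0 t := fun t =>
    (((hy t).1.mul (hz t).2).sub ((hy t).2.mul (hz t).1)).congr_deriv (by ring)
  exact is_const_of_deriv_eq_zero (fun t => (hW t).differentiableAt) (fun t => (hW t).deriv) t s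

theorem wronskian_eq_zero {l : Filter ℝ} [l.NeBot] (hy : SolvesLinearODE q y y')
    (hz : SolvesLinearODE q z z') (hW : Tendsto (fun t => y t * z' t - y' t * z t) l (𝓝 0))
    (t : ℝ) : y t * z' t - y' t * z t = 0 :=
  tendsto_nhds_unique (tendsto_const_nhds.congr fun s => (hy.wronskian_eq hz s t).symm) hW

theorem eq_const_mul_of_wronskian_eq_zero (hy : SolvesLinearODE q y y')
    (hz : SolvesLinearODE q z z') (hq : Continuous q) {t₀ : ℝ} (hz₀ : z t₀ = 0)
    (hz₀' : z' t₀ ≠ 0) (hW : y t₀ * z' t₀ - y' t₀ * z t₀ = 0) :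
    y = fun t => y' t₀ / z' t₀ * z t := by
  have hy₀ : y t₀ = 0 := by simpa [hz₀, hz₀'] using hW
  have h := (hy.sub_const_mul hz (y' t₀ / z' t₀)).eq_zero hq (t₀ := t₀)
    (by simp [hy₀, hz₀]) (by field_simp; ring)
  funext t
  simpa [sub_eq_zero] using congrFun h t

end SolvesLinearODE

theorem Real.hasDerivAt_tanh (x : ℝ) : HasDerivAt tanh (1 / cosh x ^ 2) x := by
  have h := (hasDerivAt_sinh x).div (hasDerivAt_cosh x) (cosh_pos x).ne'
  rw [show tanh = sinh / cosh from funext tanh_eq_sinh_div_cosh]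
  exact h.congr_deriv (by rw [← cosh_sq_sub_sinh_sq x]; ring)

section Soliton

variable (ω : ℝ)

theorem hasDerivAt_phiSol (x : ℝ) :
    HasDerivAt (phiSol ω) (-√(1 - ω ^ 2) * tanh (√(1 - ω ^ 2) * x) * phiSol ω x) x := by
  have hcosh := ((hasDerivAt_id' x).const_mul √(1 - ω ^ 2)).cosh
  have h := ((hasDerivAt_const x (1 : ℝ)).div hcosh (cosh_pos _).ne').const_mul √(2 * (1 - ω ^ 2))
  refine h.congr_deriv ?_
  rw [phiSol, tanh_eq_sinh_div_cosh]
  field_simp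
  ring

theorem deriv_phiSol :
    deriv (phiSol ω) = fun x => -√(1 - ω ^ 2) * tanh (√(1 - ω ^ 2) * x) * phiSol ω x :=
  funext fun x => (hasDerivAt_phiSol ω x).deriv

theorem phiSol_zero : phiSol ω 0 = √(2 * (1 - ω ^ 2)) := by
  simp [phiSol]

theorem continuous_phiSol : Continuous (phiSol ω) :=
  continuous_iff_continuousAt.2 fun x => (hasDerivAt_phiSol ω x).continuousAt

variable {ω}

theorem hasDerivAt_deriv_phiSol (hω : ω ^ 2 ≤ 1) (x : ℝ) :
    HasDerivAt (deriv (phiSol ω)) ((1 - ω ^ 2) * phiSol ω x - phiSol ω x ^ 3) x := by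
  have hb : √(1 - ω ^ 2) ^ 2 = 1 - ω ^ 2 := sq_sqrt (by linarith)
  have ha : √(2 * (1 - ω ^ 2)) ^ 2 = 2 * √(1 - ω ^ 2) ^ 2 := by rw [sq_sqrt (by linarith), hb]
  have h := (((hasDerivAt_tanh _).comp x ((hasDerivAt_id' x).const_mul √(1 - ω ^ 2))).const_mul
    (-√(1 - ω ^ 2))).mul (hasDerivAt_phiSol ω x)
  rw [deriv_phiSol]
  refine h.congr_deriv ?_
  simp only [phiSol, tanh_eq_sinh_div_cosh, Function.comp_apply]
  have hc := cosh_sq (√(1 - ω ^ 2) * x)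
  generalize √(1 - ω ^ 2) = b, √(2 * (1 - ω ^ 2)) = a at *
  field_simp
  linear_combination (-(a * b ^ 2)) * hc + a * cosh (b * x) ^ 2 * hb + a * ha

theorem solvesLinearODE_deriv_phiSol (hω : ω ^ 2 ≤ 1) :
    SolvesLinearODE (fun x => (1 - ω ^ 2) - 3 * phiSol ω x ^ 2) (deriv (phiSol ω))
      (fun x => (1 - ω ^ 2) * phiSol ω x - phiSol ω x ^ 3) := fun x =>
  have hφ := (hasDerivAt_phiSol ω x).differentiableAt.hasDerivAt
  ⟨hasDerivAt_deriv_phiSol hω x, ((hφ.const_mul _).sub (hφ.pow 3)).congr_deriv (by ring)⟩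

theorem tendsto_phiSol_atTop (hω : ω ^ 2 < 1) : Tendsto (phiSol ω) atTop (𝓝 0) := by
  have hcosh : Tendsto cosh atTop atTop :=
    tendsto_atTop_mono (fun x => by rw [cosh_eq]; linarith [exp_pos (-x)])
      (tendsto_exp_atTop.atTop_div_const two_pos)
  have h := ((tendsto_inv_atTop_zero.comp (hcosh.comp
    (tendsto_id.const_mul_atTop (sqrt_pos.2 (sub_pos.2 hω))))).const_mul √(2 * (1 - ω ^ 2)))
  simpa only [mul_zero] using h.congr fun x => by simp [phiSol]

theorem tendsto_deriv_phiSol_atTop (hω : ω ^ 2 < 1) :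
    Tendsto (deriv (phiSol ω)) atTop (𝓝 0) := by
  rw [deriv_phiSol]
  refine bdd_le_mul_tendsto_zero' √(1 - ω ^ 2) (.of_forall fun x => ?_) (tendsto_phiSol_atTop hω)
  rw [abs_mul, abs_neg, abs_of_nonneg (sqrt_nonneg _)]
  exact mul_le_of_le_one_right (sqrt_nonneg _) (abs_tanh_lt_one _).le

end Soliton

theorem Lplus_kernel_general (ω : ℝ) (hω : ω ∈ Ioo (-1 : ℝ) 1)
    (f : ℝ → ℝ) (hC2 : ContDiff ℝ 2 f)
    (hf_top : Tendsto f atTop (𝓝 0))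
    (hf'_top : Tendsto (deriv f) atTop (𝓝 0))
    (heq : ∀ x : ℝ,
      -(deriv (deriv f) x) + (1 - ω ^ 2) * f x - 3 * (phiSol ω x) ^ 2 * f x = 0) :
    ∃ c : ℝ, f = fun x => c * deriv (phiSol ω) x := by
  have hω2 : ω ^ 2 < 1 := (sq_lt_one_iff_abs_lt_one ω).2 (abs_lt.2 hω)
  have hf'C1 : ContDiff ℝ 1 (deriv f) := ((contDiff_succ_iff_deriv (n := 1)).1 hC2).2.2
  have hf : SolvesLinearODE (fun x => (1 - ω ^ 2) - 3 * phiSol ω x ^ 2) f (deriv f) := fun x =>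
    ⟨(hC2.differentiable two_ne_zero x).hasDerivAt,
      (hf'C1.differentiable one_ne_zero x).hasDerivAt.congr_deriv (by linear_combination -heq x)⟩
  have hφ := solvesLinearODE_deriv_phiSol hω2.le
  have hq : Continuous fun x => (1 - ω ^ 2) - 3 * phiSol ω x ^ 2 :=
    continuous_const.sub (continuous_const.mul ((continuous_phiSol ω).pow 2))
  have hφ_top := tendsto_phiSol_atTop hω2
  have hW := hf.wronskian_eq_zero hφ (by
    simpa using (hf_top.mul ((hφ_top.const_mul _).sub (hφ_top.pow 3))).sub
      (hf'_top.mul (tendsto_deriv_phiSol_atTop hω2))) 0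
  have hφ''₀ : (1 - ω ^ 2) * phiSol ω 0 - phiSol ω 0 ^ 3 ≠ 0 := by
    rw [phiSol_zero, pow_succ _ 2, sq_sqrt (by linarith)]
    nlinarith [mul_pos (sqrt_pos.2 (by linarith : 0 < 2 * (1 - ω ^ 2))) (sub_pos.2 hω2)]
  exact ⟨_, hf.eq_const_mul_of_wronskian_eq_zero hφ hq (by simp [deriv_phiSol]) hφ''₀ hW⟩

/-- The kernel of `L₊ = -∂ₓ² + (1-ω²) - 3φ_ω²` among decaying `C²` functions is spanned by
`φ_ω'`. -/
theorem Lplus_kernel (ω : ℝ) (hω : ω ∈ Ioo (-1 : ℝ) 1)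
    (f : ℝ → ℝ) (hC2 : ContDiff ℝ 2 f)
    (hf_top : Tendsto f atTop (𝓝 0)) (hf_bot : Tendsto f atBot (𝓝 0))
    (hf'_top : Tendsto (deriv f) atTop (𝓝 0)) (hf'_bot : Tendsto (deriv f) atBot (𝓝 0))
    (heq : ∀ x : ℝ,
      -(deriv (deriv f) x) + (1 - ω ^ 2) * f x - 3 * (phiSol ω x) ^ 2 * f x = 0) :
    ∃ c : ℝ, f = fun x => c * deriv (phiSol ω) x :=
  Lplus_kernel_general ω hω f hC2 hf_top hf'_top heq
end

section
/- Let ω ∈ (−1,1) and let φ_ω(x) = √(2(1−ω²)) · sech(√(1−ω²)·x). If f : ℝ → ℝ is a C² function with f(x) → 0 and f'(x) → 0 as |x| → ∞, satisfying −f'' + (1−ω²)f − φ_ω²·f = 0 on ℝ, then there exists c ∈ ℝ such that f = c·φ_ω. In other words, the kernel of L₋ = −∂ₓ² + (1−ω²) − φ_ω² among decaying C² functions is spanned by φ_ω. -/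
/-!
Both `f` and `φ_ω` solve `u'' = q u` with `q = (1 - ω²) - φ_ω²`, so their Wronskian
`f φ_ω' - f' φ_ω` is constant. Since `f, f' → 0` at `+∞` while `φ_ω, φ_ω'` stay bounded, the
constant is `0`; as `φ_ω > 0`, this says `(f / φ_ω)' = 0`.
-/

open Real Set Filter Topology

noncomputable def wronskian (u v : ℝ → ℝ) (x : ℝ) : ℝ :=
  u x * deriv v x - deriv u x * v x

section Wronskian

variable {u v : ℝ → ℝ}

theorem wronskian_eq_wronskian {q : ℝ → ℝ} (hu : Differentiable ℝ u)
    (hu' : Differentiable ℝ (deriv u)) (hv : Differentiable ℝ v)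
    (hv' : Differentiable ℝ (deriv v)) (hqu : ∀ x, deriv (deriv u) x = q x * u x)
    (hqv : ∀ x, deriv (deriv v) x = q x * v x) (x y : ℝ) :
    wronskian u v x = wronskian u v y := by
  have hW : ∀ x, HasDerivAt (wronskian u v) 0 x := fun x => by
    have h := ((hu x).hasDerivAt.mul (hv' x).hasDerivAt).sub
      ((hu' x).hasDerivAt.mul (hv x).hasDerivAt)
    rw [hqu, hqv] at h
    exact h.congr_deriv (by ring)
  exact is_const_of_deriv_eq_zero (fun x => (hW x).differentiableAt) (fun x => (hW x).deriv) x y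

theorem wronskian_eq_zero_of_tendsto {l : Filter ℝ} [l.NeBot]
    (hconst : ∀ x y, wronskian u v x = wronskian u v y)
    (hu : Tendsto u l (𝓝 0)) (hu' : Tendsto (deriv u) l (𝓝 0))
    (hv : IsBoundedUnder (· ≤ ·) l (norm ∘ v)) (hv' : IsBoundedUnder (· ≤ ·) l (norm ∘ deriv v))
    (x : ℝ) : wronskian u v x = 0 := by
  have hlim : Tendsto (wronskian u v) l (𝓝 (0 - 0)) :=
    (hu.zero_mul_isBoundedUnder_le hv').sub (hu'.zero_mul_isBoundedUnder_le hv)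
  rw [sub_self, show wronskian u v = fun _ => wronskian u v x from funext (hconst · x)] at hlim
  exact tendsto_nhds_unique tendsto_const_nhds hlim

theorem exists_eq_const_mul_of_wronskian_eq_zero (hu : Differentiable ℝ u)
    (hv : Differentiable ℝ v) (hv0 : ∀ x, v x ≠ 0) (hW : ∀ x, wronskian u v x = 0) :
    ∃ c : ℝ, u = fun x => c * v x := by
  have hquot : ∀ x, HasDerivAt (fun x => u x / v x) 0 x := fun x =>
    ((hu x).hasDerivAt.div (hv x).hasDerivAt (hv0 x)).congr_deriv (by
      rw [← neg_sub, show u x * deriv v x - deriv u x * v x = 0 from hW x, neg_zero, zero_div])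
  refine ⟨u 0 / v 0, funext fun x => ?_⟩
  rw [← is_const_of_deriv_eq_zero (fun x => (hquot x).differentiableAt)
    (fun x => (hquot x).deriv) x 0, div_mul_cancel₀ _ (hv0 x)]

end Wronskian

section SechProfile

variable (A k : ℝ)

theorem hasDerivAt_div_cosh_mul (x : ℝ) :
    HasDerivAt (fun x => A / cosh (k * x)) (-(A * k) * (sinh (k * x) / cosh (k * x) ^ 2)) x :=
  ((hasDerivAt_const x A).div ((hasDerivAt_const_mul k).cosh) (cosh_pos _).ne').congr_deriv
    (by ring)

theorem deriv_div_cosh_mul :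
    deriv (fun x => A / cosh (k * x)) = fun x => -(A * k) * (sinh (k * x) / cosh (k * x) ^ 2) :=
  funext fun x => (hasDerivAt_div_cosh_mul A k x).deriv

theorem hasDerivAt_sinh_mul_div_cosh_mul_sq (x : ℝ) :
    HasDerivAt (fun x => sinh (k * x) / cosh (k * x) ^ 2)
      (2 * k / cosh (k * x) ^ 3 - k / cosh (k * x)) x := by
  have hc := (cosh_pos (k * x)).ne'
  refine ((hasDerivAt_const_mul k).sinh.div ((hasDerivAt_const_mul k).cosh.pow 2)
    (pow_ne_zero 2 hc)).congr_deriv ?_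
  simp only [Pi.pow_apply]
  field_simp
  linear_combination (-2 * k * cosh (k * x)) * sinh_sq (k * x)

theorem hasDerivAt_deriv_div_cosh_mul (x : ℝ) :
    HasDerivAt (deriv fun x => A / cosh (k * x))
      (-(A * k) * (2 * k / cosh (k * x) ^ 3 - k / cosh (k * x))) x := by
  rw [deriv_div_cosh_mul]
  exact (hasDerivAt_sinh_mul_div_cosh_mul_sq k x).const_mul _

theorem deriv_deriv_div_cosh_mul {A k : ℝ} (hA : A ^ 2 = 2 * k ^ 2) (x : ℝ) :
    deriv (deriv fun x => A / cosh (k * x)) x =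
      (k ^ 2 - (A / cosh (k * x)) ^ 2) * (A / cosh (k * x)) := by
  have hc := (cosh_pos (k * x)).ne'
  rw [(hasDerivAt_deriv_div_cosh_mul A k x).deriv]
  field_simp
  linear_combination A * hA

theorem abs_div_cosh_le (x : ℝ) : |A / cosh x| ≤ |A| := by
  rw [abs_div, abs_of_pos (cosh_pos x)]
  exact div_le_self (abs_nonneg A) (one_le_cosh x)

theorem abs_sinh_div_cosh_sq_le_one (x : ℝ) : |sinh x / cosh x ^ 2| ≤ 1 := by
  rw [abs_div, abs_of_pos (pow_pos (cosh_pos x) 2), div_le_one (pow_pos (cosh_pos x) 2)]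
  nlinarith [cosh_sq x, one_le_cosh x, abs_nonneg (sinh x), sq_abs (sinh x)]

theorem isBoundedUnder_div_cosh_mul (l : Filter ℝ) :
    IsBoundedUnder (· ≤ ·) l (norm ∘ fun x => A / cosh (k * x)) :=
  isBoundedUnder_of ⟨|A|, fun x => abs_div_cosh_le A (k * x)⟩

theorem isBoundedUnder_deriv_div_cosh_mul (l : Filter ℝ) :
    IsBoundedUnder (· ≤ ·) l (norm ∘ deriv fun x => A / cosh (k * x)) :=
  isBoundedUnder_of ⟨|A * k|, fun x => by
    rw [deriv_div_cosh_mul, Function.comp_apply, norm_eq_abs, abs_mul, abs_neg]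
    exact mul_le_of_le_one_right (abs_nonneg _) (abs_sinh_div_cosh_sq_le_one _)⟩

end SechProfile

theorem phiSol_eq (ω : ℝ) :
    phiSol ω = fun x => √(2 * (1 - ω ^ 2)) / cosh (√(1 - ω ^ 2) * x) := by
  funext x
  rw [phiSol, mul_one_div]

theorem phiSol_pos {ω : ℝ} (hω : ω ^ 2 < 1) (x : ℝ) : 0 < phiSol ω x := by
  rw [phiSol_eq]
  exact div_pos (sqrt_pos.mpr (by linarith)) (cosh_pos _)

theorem deriv_deriv_phiSol {ω : ℝ} (hω : ω ^ 2 ≤ 1) (x : ℝ) :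
    deriv (deriv (phiSol ω)) x = ((1 - ω ^ 2) - phiSol ω x ^ 2) * phiSol ω x := by
  have hk : √(1 - ω ^ 2) ^ 2 = 1 - ω ^ 2 := sq_sqrt (by linarith)
  have hA : √(2 * (1 - ω ^ 2)) ^ 2 = 2 * √(1 - ω ^ 2) ^ 2 := by
    rw [hk, sq_sqrt (by linarith)]
  rw [phiSol_eq, deriv_deriv_div_cosh_mul hA, hk]

theorem Lminus_kernel_general (ω : ℝ) (hω : ω ∈ Ioo (-1 : ℝ) 1)
    (f : ℝ → ℝ) (hC2 : ContDiff ℝ 2 f)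
    (hf_top : Tendsto f atTop (𝓝 0))
    (hf'_top : Tendsto (deriv f) atTop (𝓝 0))
    (heq : ∀ x : ℝ,
      -(deriv (deriv f) x) + (1 - ω ^ 2) * f x - (phiSol ω x) ^ 2 * f x = 0) :
    ∃ c : ℝ, f = fun x => c * phiSol ω x := by
  have hω2 : ω ^ 2 < 1 := (sq_lt_one_iff_abs_lt_one ω).mpr (abs_lt.mpr hω)
  have hf : Differentiable ℝ f := hC2.differentiable (by norm_num)
  have hf' : Differentiable ℝ (deriv f) :=
    ((contDiff_succ_iff_deriv (n := 1)).mp hC2).2.2.differentiable one_ne_zero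
  have hφ : Differentiable ℝ (phiSol ω) := fun x =>
    (phiSol_eq ω ▸ hasDerivAt_div_cosh_mul _ _ x).differentiableAt
  have hφ' : Differentiable ℝ (deriv (phiSol ω)) := fun x =>
    (phiSol_eq ω ▸ hasDerivAt_deriv_div_cosh_mul _ _ x).differentiableAt
  have hconst := wronskian_eq_wronskian hf hf' hφ hφ'
    (fun x => by linear_combination -(heq x)) (deriv_deriv_phiSol hω2.le)
  have hW := wronskian_eq_zero_of_tendsto hconst hf_top hf'_top
    (phiSol_eq ω ▸ isBoundedUnder_div_cosh_mul _ _ _)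
    (phiSol_eq ω ▸ isBoundedUnder_deriv_div_cosh_mul _ _ _)
  exact exists_eq_const_mul_of_wronskian_eq_zero hf hφ (fun x => (phiSol_pos hω2 x).ne') hW

/-- The kernel of `L₋ = -∂ₓ² + (1-ω²) - φ_ω²` among decaying `C²` functions is spanned by
`φ_ω`. -/
theorem Lminus_kernel (ω : ℝ) (hω : ω ∈ Ioo (-1 : ℝ) 1)
    (f : ℝ → ℝ) (hC2 : ContDiff ℝ 2 f)
    (hf_top : Tendsto f atTop (𝓝 0)) (hf_bot : Tendsto f atBot (𝓝 0))
    (hf'_top : Tendsto (deriv f) atTop (𝓝 0)) (hf'_bot : Tendsto (deriv f) atBot (𝓝 0))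
    (heq : ∀ x : ℝ,
      -(deriv (deriv f) x) + (1 - ω ^ 2) * f x - (phiSol ω x) ^ 2 * f x = 0) :
    ∃ c : ℝ, f = fun x => c * phiSol ω x :=
  Lminus_kernel_general ω hω f hC2 hf_top hf'_top heq
end

section
/- Let ω = 1/√2 and for μ ∈ (−1,1) let φ_μ(x) = √(2(1−μ²)) · sech(√(1−μ²)·x), with standing-wave state Φ_μ = (φ_μ, iμφ_μ, −φ_μ², 0), energy E(Φ_μ) = ((1+2μ²)·√(1−μ²)/3)·∫φ₀² and charge Q(Φ_μ) = μ·√(1−μ²)·∫φ₀². Then the degenerate second-order expansion holds: lim_{λ→1} [ E(Φ_{λω}) − λω·Q(Φ_{λω}) − E(Φ_ω) + λω·Q(Φ_ω) ] / (λ−1)² = 0; that is, S_{λω}(Φ_{λω}) − S_{λω}(Φ_ω) = o((λ−1)²) as λ → 1, where S_μ = E − μQ. -/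
open Real Set MeasureTheory Complex Filter Topology

/-- The energy of a static state `(u,v,n,m)` of the KGZ system. -/
noncomputable def stateEnergy (c₀ : ℝ) (u v : ℝ → ℂ) (n m : ℝ → ℝ) : ℝ :=
  (1 / 2) * (∫ x : ℝ, ‖v x‖ ^ 2)
  + (1 / (4 * c₀ ^ 2)) * (∫ x : ℝ, (deriv m x) ^ 2)
  + (1 / 2) * (∫ x : ℝ, ‖deriv u x‖ ^ 2)
  + (1 / 2) * (∫ x : ℝ, ‖u x‖ ^ 2)
  + (1 / 4) * (∫ x : ℝ, (n x) ^ 2)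
  + (1 / 2) * (∫ x : ℝ, n x * ‖u x‖ ^ 2)

/-- The charge of a static state `(u,v,n,m)` of the KGZ system. -/
noncomputable def stateCharge (u v : ℝ → ℂ) : ℝ :=
  ∫ x : ℝ, ((starRingEnd ℂ) (u x) * v x).im

/-- The energy `E(Φ_μ)` of the standing-wave state `Φ_μ = (φ_μ, iμφ_μ, -φ_μ², 0)`. -/
noncomputable def standE (c₀ μ : ℝ) : ℝ :=
  stateEnergy c₀ (fun x => ((phiSol μ x : ℝ) : ℂ))
    (fun x => Complex.I * ((μ * phiSol μ x : ℝ) : ℂ))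
    (fun x => -(phiSol μ x) ^ 2) (fun _ => 0)

/-- The charge `Q(Φ_μ)` of the standing-wave state `Φ_μ = (φ_μ, iμφ_μ, -φ_μ², 0)`. -/
noncomputable def standQ (μ : ℝ) : ℝ :=
  stateCharge (fun x => ((phiSol μ x : ℝ) : ℂ))
    (fun x => Complex.I * ((μ * phiSol μ x : ℝ) : ℂ))

/-!
After the substitution `x ↦ √(1 - μ²) x`, every integral in `E(Φ_μ)` and `Q(Φ_μ)` is a multiple
of `∫ sech² = 2`, `∫ sech⁴ = 4/3` or `∫ tanh² sech² = 2/3` (antiderivatives `tanh`,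
`tanh - tanh³/3`, `tanh³/3`), which gives the closed forms with `∫ φ₀² = 4`.
At `ω = 1/√2` the action difference `S_{λω}(Φ_{λω}) - S_{λω}(Φ_ω)` becomes `(√2/3)(a³ + 3λ - 4)`
with `a = √(2 - λ²)`. Multiplying by the conjugate `a³ + 4 - 3λ` gives
`(2 - λ²)³ - (4 - 3λ)² = (λ - 1)³ (8 - 3λ² - λ³)`, so the difference is cubic in `λ - 1`.
-/

lemma integral_eq_two_mul_sub_of_hasDerivAt_of_even {f g : ℝ → ℝ} {l : ℝ}
    (heven : ∀ x, f (-x) = f x) (hderiv : ∀ x ∈ Ici 0, HasDerivAt g (f x) x)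
    (hf : ∀ x ∈ Ioi 0, 0 ≤ f x) (hg : Tendsto g atTop (𝓝 l)) :
    ∫ x, f x = 2 * (l - g 0) := by
  have habs : (fun x => f |x|) = f := by
    funext x
    rcases abs_choice x with h | h <;> rw [h]
    exact heven x
  rw [← habs, integral_comp_abs, integral_Ioi_of_hasDerivAt_of_nonneg' hderiv hf hg]

lemma integral_const_mul_comp_mul_left (f : ℝ → ℝ) (c : ℝ) {k : ℝ} (hk : 0 < k) :
    ∫ x, c * f (k * x) = c / k * ∫ x, f x := by
  rw [integral_const_mul, Measure.integral_comp_mul_left, abs_of_pos (inv_pos.2 hk), smul_eq_mul]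
  ring

namespace Real

lemma hasDerivAt_tanh_s19 (x : ℝ) : HasDerivAt tanh ((cosh x)⁻¹ ^ 2) x := by
  rw [show tanh = fun y => sinh y / cosh y from funext tanh_eq_sinh_div_cosh]
  refine ((hasDerivAt_sinh x).div (hasDerivAt_cosh x) (cosh_pos x).ne').congr_deriv ?_
  field_simp
  linear_combination cosh_sq_sub_sinh_sq x

lemma tendsto_tanh_atTop : Tendsto tanh atTop (𝓝 1) := by
  have hexp : Tendsto (fun x : ℝ => exp (-2 * x)) atTop (𝓝 0) :=
    tendsto_exp_atBot.comp (tendsto_id.const_mul_atTop_of_neg (by norm_num))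
  have htanh : tanh = fun x => (1 - exp (-2 * x)) / (1 + exp (-2 * x)) := by
    funext x
    have h2 : exp (-2 * x) = exp (-x) * exp (-x) := by rw [← exp_add]; ring_nf
    rw [tanh_eq_sinh_div_cosh, sinh_eq, cosh_eq, h2, exp_neg]
    field_simp
  rw [htanh]
  simpa [Pi.div_def] using (tendsto_const_nhds (x := (1 : ℝ)).sub hexp).div
    (tendsto_const_nhds.add hexp) (by norm_num : (1 : ℝ) + 0 ≠ 0)

lemma tanh_sq_add_inv_cosh_sq (x : ℝ) : tanh x ^ 2 + (cosh x)⁻¹ ^ 2 = 1 := by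
  have hc := (cosh_pos x).ne'
  rw [tanh_eq_sinh_div_cosh]
  field_simp
  linear_combination -cosh_sq_sub_sinh_sq x

lemma integral_inv_cosh_sq : ∫ x, (cosh x)⁻¹ ^ 2 = 2 := by
  have := integral_eq_two_mul_sub_of_hasDerivAt_of_even (by simp)
    (fun x _ => hasDerivAt_tanh_s19 x) (fun x _ => by positivity) tendsto_tanh_atTop
  simpa using this

lemma integral_inv_cosh_pow_four : ∫ x, (cosh x)⁻¹ ^ 4 = 4 / 3 := by
  have hderiv (x : ℝ) : HasDerivAt (fun x => tanh x - tanh x ^ 3 / 3) ((cosh x)⁻¹ ^ 4) x := by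
    refine ((hasDerivAt_tanh_s19 x).sub (((hasDerivAt_tanh_s19 x).pow 3).div_const 3)).congr_deriv ?_
    linear_combination -(cosh x)⁻¹ ^ 2 * tanh_sq_add_inv_cosh_sq x
  have := integral_eq_two_mul_sub_of_hasDerivAt_of_even (by simp) (fun x _ => hderiv x)
    (fun x _ => by positivity)
    (tendsto_tanh_atTop.sub ((tendsto_tanh_atTop.pow 3).div_const 3))
  rw [this]; norm_num

lemma integral_tanh_sq_mul_inv_cosh_sq : ∫ x, tanh x ^ 2 * (cosh x)⁻¹ ^ 2 = 2 / 3 := by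
  have hderiv (x : ℝ) :
      HasDerivAt (fun x => tanh x ^ 3 / 3) (tanh x ^ 2 * (cosh x)⁻¹ ^ 2) x := by
    refine (((hasDerivAt_tanh_s19 x).pow 3).div_const 3).congr_deriv ?_
    ring
  have := integral_eq_two_mul_sub_of_hasDerivAt_of_even (by simp) (fun x _ => hderiv x)
    (fun x _ => by positivity) ((tendsto_tanh_atTop.pow 3).div_const 3)
  rw [this]; norm_num

lemma integral_mul_inv_cosh_mul_sq (a : ℝ) {k : ℝ} (hk : 0 < k) :
    ∫ x, (a * (cosh (k * x))⁻¹) ^ 2 = 2 * a ^ 2 / k := by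
  simp_rw [mul_pow]
  rw [integral_const_mul_comp_mul_left (fun x => (cosh x)⁻¹ ^ 2) _ hk, integral_inv_cosh_sq]
  ring

lemma integral_mul_inv_cosh_mul_pow_four (a : ℝ) {k : ℝ} (hk : 0 < k) :
    ∫ x, (a * (cosh (k * x))⁻¹) ^ 4 = 4 * a ^ 4 / (3 * k) := by
  simp_rw [mul_pow]
  rw [integral_const_mul_comp_mul_left (fun x => (cosh x)⁻¹ ^ 4) _ hk,
    integral_inv_cosh_pow_four]
  field_simp

lemma hasDerivAt_mul_inv_cosh_mul (a k x : ℝ) :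
    HasDerivAt (fun x => a * (cosh (k * x))⁻¹)
      (-(a * k) * (tanh (k * x) * (cosh (k * x))⁻¹)) x := by
  have hcosh : HasDerivAt (fun x => cosh (k * x)) (sinh (k * x) * k) x :=
    (hasDerivAt_cosh _).comp x ((hasDerivAt_id x).const_mul k |>.congr_deriv (mul_one k))
  refine ((hcosh.inv (cosh_pos _).ne').const_mul a).congr_deriv ?_
  rw [tanh_eq_sinh_div_cosh]
  ring

lemma integral_deriv_mul_inv_cosh_mul_sq (a : ℝ) {k : ℝ} (hk : 0 < k) :
    ∫ x, deriv (fun x => a * (cosh (k * x))⁻¹) x ^ 2 = 2 * a ^ 2 * k / 3 := by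
  simp_rw [(hasDerivAt_mul_inv_cosh_mul a k _).deriv, mul_pow, neg_sq]
  rw [integral_const_mul_comp_mul_left (fun x => tanh x ^ 2 * (cosh x)⁻¹ ^ 2) _ hk,
    integral_tanh_sq_mul_inv_cosh_sq]
  field_simp

end Real

lemma phiSol_eq_mul_inv_cosh (μ : ℝ) :
    phiSol μ = fun x => √(2 * (1 - μ ^ 2)) * (Real.cosh (√(1 - μ ^ 2) * x))⁻¹ := by
  funext x
  rw [phiSol, one_div]

lemma sq_sqrt_two_mul_one_sub_sq {μ : ℝ} (hμ : μ ^ 2 < 1) :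
    √(2 * (1 - μ ^ 2)) ^ 2 = 2 * √(1 - μ ^ 2) ^ 2 := by
  rw [sq_sqrt (by linarith), sq_sqrt (by linarith)]

lemma integral_phiSol_sq {μ : ℝ} (hμ : μ ^ 2 < 1) :
    ∫ x, phiSol μ x ^ 2 = 4 * √(1 - μ ^ 2) := by
  have hk : 0 < √(1 - μ ^ 2) := sqrt_pos.2 (by linarith)
  rw [phiSol_eq_mul_inv_cosh, Real.integral_mul_inv_cosh_mul_sq _ hk,
    sq_sqrt_two_mul_one_sub_sq hμ]
  field_simp
  ring

lemma integral_phiSol_pow_four {μ : ℝ} (hμ : μ ^ 2 < 1) :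
    ∫ x, phiSol μ x ^ 4 = 16 / 3 * √(1 - μ ^ 2) ^ 3 := by
  have hk : 0 < √(1 - μ ^ 2) := sqrt_pos.2 (by linarith)
  rw [phiSol_eq_mul_inv_cosh, Real.integral_mul_inv_cosh_mul_pow_four _ hk,
    show (4 : ℕ) = 2 * 2 from rfl, pow_mul, sq_sqrt_two_mul_one_sub_sq hμ]
  field_simp
  ring

lemma integral_deriv_phiSol_sq {μ : ℝ} (hμ : μ ^ 2 < 1) :
    ∫ x, deriv (phiSol μ) x ^ 2 = 4 / 3 * √(1 - μ ^ 2) ^ 3 := by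
  have hk : 0 < √(1 - μ ^ 2) := sqrt_pos.2 (by linarith)
  rw [phiSol_eq_mul_inv_cosh, Real.integral_deriv_mul_inv_cosh_mul_sq _ hk,
    sq_sqrt_two_mul_one_sub_sq hμ]
  ring

lemma standQ_eq {μ : ℝ} (hμ : μ ^ 2 < 1) : standQ μ = 4 * μ * √(1 - μ ^ 2) := by
  have hcharge (x : ℝ) :
      ((starRingEnd ℂ) (phiSol μ x : ℂ) * (I * ((μ * phiSol μ x : ℝ) : ℂ))).im
        = μ * phiSol μ x ^ 2 := by
    simp only [conj_ofReal, mul_im, ofReal_re, ofReal_im, I_re, I_im, mul_re]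
    ring
  rw [standQ, stateCharge, funext hcharge, integral_const_mul, integral_phiSol_sq hμ]
  ring

lemma standE_eq (c₀ : ℝ) {μ : ℝ} (hμ : μ ^ 2 < 1) :
    standE c₀ μ = 4 / 3 * (1 + 2 * μ ^ 2) * √(1 - μ ^ 2) := by
  have hderiv (x : ℝ) :
      deriv (fun x => (phiSol μ x : ℂ)) x = ((deriv (phiSol μ) x : ℝ) : ℂ) := by
    have : DifferentiableAt ℝ (phiSol μ) x := by
      rw [phiSol_eq_mul_inv_cosh]
      exact (Real.hasDerivAt_mul_inv_cosh_mul _ _ x).differentiableAt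
    exact this.hasDerivAt.ofReal_comp.deriv
  simp only [standE, stateEnergy, hderiv, norm_mul, norm_I, norm_real, Real.norm_eq_abs,
    sq_abs, one_mul, deriv_const', mul_pow, neg_sq, ← pow_mul, neg_mul, ← pow_add, integral_neg,
    integral_const_mul, ne_eq, OfNat.ofNat_ne_zero, not_false_eq_true, zero_pow, integral_zero]
  rw [integral_phiSol_sq hμ, integral_phiSol_pow_four hμ, integral_deriv_phiSol_sq hμ]
  linear_combination -(2 / 3 * √(1 - μ ^ 2)) * sq_sqrt (by linarith : 0 ≤ 1 - μ ^ 2)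

lemma sqrt_one_sub_sq_mul_inv_sqrt_two (t : ℝ) :
    √(1 - (t * (1 / √2)) ^ 2) = √(2 - t ^ 2) / √2 := by
  rw [← sqrt_div' _ (by norm_num : (0 : ℝ) ≤ 2)]
  congr 1
  field_simp
  rw [sq_sqrt (by norm_num)]
  ring

lemma action_difference_at_inv_sqrt_two (c₀ : ℝ) {lam : ℝ} (hlam : lam ^ 2 < 2) :
    standE c₀ (lam * (1 / √2)) - lam * (1 / √2) * standQ (lam * (1 / √2))
      - standE c₀ (1 / √2) + lam * (1 / √2) * standQ (1 / √2)
      = √2 / 3 * (√(2 - lam ^ 2) ^ 3 + 3 * lam - 4) := by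
  have hs : √2 ^ 2 = 2 := sq_sqrt (by norm_num)
  have ha : √(2 - lam ^ 2) ^ 2 = 2 - lam ^ 2 := sq_sqrt (by linarith)
  have hμ : (lam * (1 / √2)) ^ 2 < 1 := by
    rw [mul_pow, div_pow, hs]; linarith
  have hω : (1 / √2) ^ 2 < 1 := by rw [div_pow, hs]; norm_num
  have hω' : √(1 - (1 / √2) ^ 2) = 1 / √2 := by
    simpa [show (2 : ℝ) - 1 = 1 by norm_num] using sqrt_one_sub_sq_mul_inv_sqrt_two 1
  rw [standE_eq c₀ hμ, standQ_eq hμ, standE_eq c₀ hω, standQ_eq hω,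
    sqrt_one_sub_sq_mul_inv_sqrt_two, hω']
  set a := √(2 - lam ^ 2)
  field_simp
  linear_combination (4 * a - 4 + (4 - 3 * lam - a ^ 3) * (√2 ^ 2 + 2)) * hs - 4 * a * ha

lemma tendsto_sqrt_two_sub_sq_pow_three_add_div_sq :
    Tendsto (fun t : ℝ => (√(2 - t ^ 2) ^ 3 + 3 * t - 4) / (t - 1) ^ 2) (𝓝[≠] 1) (𝓝 0) := by
  have hcont : ContinuousAt (fun t : ℝ => (t - 1) * (8 - 3 * t ^ 2 - t ^ 3)
      / (√(2 - t ^ 2) ^ 3 + 4 - 3 * t)) 1 :=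
    (by fun_prop : ContinuousAt (fun t : ℝ => (t - 1) * (8 - 3 * t ^ 2 - t ^ 3)) 1).div
      (by fun_prop) (by norm_num)
  have hlim := hcont.tendsto.mono_left (nhdsWithin_le_nhds (s := {1}ᶜ))
  rw [sub_self, zero_mul, zero_div] at hlim
  refine hlim.congr' ?_
  have hnear : Ioo (0 : ℝ) (4 / 3) ∈ 𝓝[≠] 1 :=
    nhdsWithin_le_nhds (Ioo_mem_nhds (by norm_num) (by norm_num))
  filter_upwards [self_mem_nhdsWithin, hnear] with t ht1 ht
  have ha : √(2 - t ^ 2) ^ 2 = 2 - t ^ 2 := sq_sqrt (by nlinarith [ht.1, ht.2])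
  set a := √(2 - t ^ 2)
  have hden : 0 < a ^ 3 + 4 - 3 * t := by
    linarith [pow_nonneg (sqrt_nonneg (2 - t ^ 2)) 3, ht.2]
  rw [div_eq_div_iff hden.ne' (pow_ne_zero 2 (sub_ne_zero.2 ht1))]
  linear_combination -((a ^ 2) ^ 2 + a ^ 2 * (2 - t ^ 2) + (2 - t ^ 2) ^ 2) * ha

theorem degenerate_second_order_expansion_general (c₀ : ℝ)
    (ω : ℝ) (hω : ω = 1 / Real.sqrt 2) :
    (∀ μ ∈ Ioo (-1 : ℝ) 1,
      standE c₀ μ = ((1 + 2 * μ ^ 2) * Real.sqrt (1 - μ ^ 2) / 3)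
        * (∫ x : ℝ, (phiSol 0 x) ^ 2)) ∧
    (∀ μ ∈ Ioo (-1 : ℝ) 1,
      standQ μ = μ * Real.sqrt (1 - μ ^ 2) * (∫ x : ℝ, (phiSol 0 x) ^ 2)) ∧
    Tendsto (fun lam : ℝ =>
        (standE c₀ (lam * ω) - lam * ω * standQ (lam * ω)
          - standE c₀ ω + lam * ω * standQ ω) / (lam - 1) ^ 2)
      (𝓝[≠] (1 : ℝ)) (𝓝 0) := by
  have hnorm : ∫ x, phiSol 0 x ^ 2 = 4 := by
    simpa using integral_phiSol_sq (μ := 0) (by norm_num)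
  refine ⟨fun μ hμ => ?_, fun μ hμ => ?_, ?_⟩
  · rw [standE_eq c₀ ((sq_lt_one_iff_abs_lt_one μ).2 (abs_lt.2 hμ)), hnorm]
    ring
  · rw [standQ_eq ((sq_lt_one_iff_abs_lt_one μ).2 (abs_lt.2 hμ)), hnorm]
    ring
  · subst hω
    have hnear : ∀ᶠ lam : ℝ in 𝓝[≠] 1, lam ^ 2 < 2 :=
      nhdsWithin_le_nhds ((continuous_pow 2).continuousAt.eventually_lt continuousAt_const
        (by norm_num))
    have hlim := tendsto_sqrt_two_sub_sq_pow_three_add_div_sq.const_mul (√2 / 3)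
    rw [mul_zero] at hlim
    refine hlim.congr' (hnear.mono fun lam hlam => ?_)
    dsimp only
    rw [action_difference_at_inv_sqrt_two c₀ hlam, mul_div_assoc]

/-- At the degenerate frequency `ω = 1/√2`, the energy and charge of the standing-wave
state have the closed forms `E(Φ_μ) = ((1+2μ²)√(1-μ²)/3)∫φ₀²`,
`Q(Φ_μ) = μ√(1-μ²)∫φ₀²`, and the action difference is degenerate to second order:
`S_{λω}(Φ_{λω}) - S_{λω}(Φ_ω) = o((λ-1)²)` as `λ → 1`, where `S_μ = E - μQ`. -/
theorem degenerate_second_order_expansion (c₀ : ℝ) (hc₀ : 0 < c₀)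
    (ω : ℝ) (hω : ω = 1 / Real.sqrt 2) :
    (∀ μ ∈ Ioo (-1 : ℝ) 1,
      standE c₀ μ = ((1 + 2 * μ ^ 2) * Real.sqrt (1 - μ ^ 2) / 3)
        * (∫ x : ℝ, (phiSol 0 x) ^ 2)) ∧
    (∀ μ ∈ Ioo (-1 : ℝ) 1,
      standQ μ = μ * Real.sqrt (1 - μ ^ 2) * (∫ x : ℝ, (phiSol 0 x) ^ 2)) ∧
    Tendsto (fun lam : ℝ =>
        (standE c₀ (lam * ω) - lam * ω * standQ (lam * ω)
          - standE c₀ ω + lam * ω * standQ ω) / (lam - 1) ^ 2)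
      (𝓝[≠] (1 : ℝ)) (𝓝 0) :=
  degenerate_second_order_expansion_general c₀ ω hω
end
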